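/- arXiv:0911.1802 — 2 statements merged into one kernel-verified Lean document; each statement's English description precedes it below -/
import Mathlib

section
/- Let K be a complete nonarchimedean field of residual characteristic p > 0 equipped with a derivation ∂ of rational type with rational parameter u, and let K^(∂) ⊆ K be the fixed field of the ℤ/pℤ-action x ↦ T(x; ∂; (ζ_p^i − 1)u) (assuming ζ_p ∈ K). Then the residue field of K^(∂) contains the p-th powers of the residue field of K, i.e., κ_{K^(∂)} ⊇ (κ_K)^p. -/
/-!
Each `σ i` is a Taylor series in the parameter `(ζ ^ i - 1) u`, which is small because
`‖ζ - 1‖ < 1` when the residue characteristic is `p` (`(ζ - 1) ^ p` is `p` times an integral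
element). Hence `σ i` moves the unit ball by at most `‖ζ - 1‖`. Taylor parameters add, so
`σ j ∘ σ i = σ (i + j)` and the orbit product `y = ∏ i, σ i x` is invariant; by the ultrametric
inequality it lies within `‖ζ - 1‖ < 1` of `x ^ p`.
-/

open Finset

namespace IsUltrametricDist

lemma norm_prod_sub_prod_le {R ι : Type*} [NormedCommRing R] [NormOneClass R]
    [IsUltrametricDist R] (s : Finset ι) {f g : ι → R} {ε : ℝ} (hε : 0 ≤ ε)
    (hf : ∀ i ∈ s, ‖f i‖ ≤ 1) (hg : ∀ i ∈ s, ‖g i‖ ≤ 1) (hfg : ∀ i ∈ s, ‖f i - g i‖ ≤ ε) :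
    ‖∏ i ∈ s, f i - ∏ i ∈ s, g i‖ ≤ ε := by
  induction s using Finset.cons_induction with
  | empty => simpa using hε
  | cons a s ha ih =>
    simp only [forall_mem_cons] at hf hg hfg
    have hgs : ‖∏ i ∈ s, g i‖ ≤ 1 :=
      (Finset.norm_prod_le _ _).trans (prod_le_one (fun _ _ => norm_nonneg _) hg.2)
    rw [prod_cons, prod_cons, show f a * ∏ i ∈ s, f i - g a * ∏ i ∈ s, g i
      = f a * (∏ i ∈ s, f i - ∏ i ∈ s, g i) + (f a - g a) * ∏ i ∈ s, g i by ring]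
    refine (norm_add_le_max _ _).trans (max_le ?_ ?_)
    · calc _ ≤ ‖f a‖ * ‖∏ i ∈ s, f i - ∏ i ∈ s, g i‖ := norm_mul_le _ _
        _ ≤ 1 * ε := by gcongr; exacts [hf.1, ih hf.2 hg.2 hfg.2]
        _ = ε := one_mul ε
    · calc _ ≤ ‖f a - g a‖ * ‖∏ i ∈ s, g i‖ := norm_mul_le _ _
        _ ≤ ε * 1 := by gcongr; exact hfg.1
        _ = ε := mul_one ε

lemma norm_le_one_of_norm_sub_one_le_one {R : Type*} [SeminormedRing R] [NormOneClass R]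
    [IsUltrametricDist R] {x : R} (hx : ‖x - 1‖ ≤ 1) : ‖x‖ ≤ 1 := by
  simpa using (norm_add_le_max (x - 1) 1).trans (max_le hx norm_one.le)

lemma exists_invariant_norm_pow_card_sub_le {G R F : Type*} [AddGroup G] [Fintype G]
    [NormedCommRing R] [NormOneClass R] [IsUltrametricDist R] [FunLike F R R] [RingHomClass F R R]
    (σ : G → F) (hσ : ∀ i j x, σ j (σ i x) = σ (i + j) x) {x : R} (hx : ‖x‖ ≤ 1) {ε : ℝ}
    (hε : ε ≤ 1) (hσx : ∀ i, ‖σ i x - x‖ ≤ ε) :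
    ∃ y, (∀ i, σ i y = y) ∧ ‖y‖ ≤ 1 ∧ ‖x ^ Fintype.card G - y‖ ≤ ε := by
  have hσ_le (i : G) : ‖σ i x‖ ≤ 1 := by
    simpa using (norm_add_le_max (σ i x - x) x).trans (max_le ((hσx i).trans hε) hx)
  refine ⟨∏ i, σ i x, fun j => ?_, ?_, ?_⟩
  · rw [map_prod]
    exact Fintype.prod_equiv (Equiv.addRight j) _ _ fun i => hσ i j x
  · exact (Finset.norm_prod_le _ _).trans
      (prod_le_one (fun _ _ => norm_nonneg _) fun i _ => hσ_le i)
  · rw [← card_univ, ← prod_const]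
    exact norm_prod_sub_prod_le _ ((norm_nonneg _).trans (hσx 0)) (fun _ _ => hx)
      (fun i _ => hσ_le i) fun i _ => norm_sub_rev x (σ i x) ▸ hσx i

variable {K : Type*} [NormedField K] [IsUltrametricDist K]

lemma norm_pow_sub_one_le {ζ : K} (hζ : ‖ζ‖ ≤ 1) (k : ℕ) : ‖ζ ^ k - 1‖ ≤ ‖ζ - 1‖ := by
  rw [← geom_sum_mul, norm_mul]
  refine mul_le_of_le_one_left (norm_nonneg _) (norm_sum_le_of_forall_le_of_nonneg zero_le_one ?_)
  exact fun i _ => (norm_pow ζ i).trans_le (pow_le_one₀ (norm_nonneg ζ) hζ)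

lemma norm_sub_one_lt_one_of_pow_eq_one {p : ℕ} (hp : p.Prime) (hpK : ‖(p : K)‖ < 1) {ζ : K}
    (hζ : ζ ^ p = 1) : ‖ζ - 1‖ < 1 := by
  have hζ1 : ‖ζ‖ = 1 :=
    (pow_eq_one_iff_of_nonneg (norm_nonneg ζ) hp.ne_zero).mp (by rw [← norm_pow, hζ, norm_one])
  have hle : ‖ζ - 1‖ ≤ 1 := by
    simpa [← sub_eq_add_neg, hζ1] using norm_add_le_max ζ (-1)
  have hpow : (ζ - 1) ^ p =
      -(p * ∑ k ∈ Ioo 0 p, (ζ - 1) ^ k * 1 ^ (p - k) * ↑(p.choose k / p)) := by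
    have := add_pow_prime_eq' hp (ζ - 1) 1
    rw [sub_add_cancel, hζ, one_pow] at this
    linear_combination -this
  rw [← pow_lt_one_iff_of_nonneg (norm_nonneg _) hp.ne_zero, ← norm_pow, hpow, norm_neg, norm_mul]
  refine mul_lt_one_of_nonneg_of_lt_one_left (norm_nonneg _) hpK
    (norm_sum_le_of_forall_le_of_nonneg zero_le_one fun k _ => ?_)
  rw [one_pow, mul_one, norm_mul, norm_pow]
  exact mul_le_one₀ (pow_le_one₀ (norm_nonneg _) hle) (norm_nonneg _) (norm_natCast_le_one K _)

end IsUltrametricDist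

lemma pow_val_add_of_pow_eq_one {M : Type*} [Monoid M] {n : ℕ} [NeZero n] {ζ : M} (hζ : ζ ^ n = 1)
    (i j : ZMod n) : ζ ^ (i + j).val = ζ ^ i.val * ζ ^ j.val := by
  rw [← pow_add, pow_eq_pow_mod (i.val + j.val) hζ, ← ZMod.val_add]

lemma Derivation.map_eq_zero_of_pow_eq_one {R A : Type*} [CommSemiring R] [CommRing A]
    [IsDomain A] [CharZero A] [Algebra R A] (D : Derivation R A A) {ζ : A} {n : ℕ}
    (hζ : ζ ^ n = 1) (hn : n ≠ 0) : D ζ = 0 := by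
  have hζ0 : ζ ≠ 0 := by rintro rfl; simp [zero_pow hn] at hζ
  have := D.leibniz_pow ζ n
  rw [hζ, D.map_one_eq_zero, nsmul_eq_mul, smul_eq_mul] at this
  simpa [hn, hζ0] using this.symm

lemma tsum_tsum_eq_tsum_sum_antidiagonal {α : Type*} [NormedAddCommGroup α] [CompleteSpace α]
    {F : ℕ × ℕ → α} (hF : Summable F) :
    ∑' m, ∑' n, F (m, n) = ∑' N, ∑ mn ∈ antidiagonal N, F mn := by
  rw [← hF.tsum_prod, ← HasAntidiagonal.sigmaAntidiagonalEquivProd.tsum_eq F,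
    Summable.tsum_sigma (f := fun c => F (HasAntidiagonal.sigmaAntidiagonalEquivProd c))
      (HasAntidiagonal.sigmaAntidiagonalEquivProd.summable_iff.mpr hF)]
  exact tsum_congr fun N => Finset.tsum_subtype (antidiagonal N) F

section TaylorSeries

variable {K : Type*} [NormedField K] {der : K → K} {r : ℝ}

-- For `r = ‖u‖⁻¹` this is the rational-type bound `|der ^ n / n!| ≤ |u|⁻ⁿ`.
def HasBoundedTaylorCoeffs (der : K → K) (r : ℝ) : Prop :=
  ∀ (n : ℕ) (x : K), ‖(n.factorial : K)⁻¹ * der^[n] x‖ ≤ r ^ n * ‖x‖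

-- The paper's `T(x; der; h)`; the `tsum` is the junk value `0` when the series diverges.
noncomputable def taylorSeries (der : K → K) (x h : K) : K :=
  ∑' n : ℕ, (n.factorial : K)⁻¹ * der^[n] x * h ^ n

lemma HasBoundedTaylorCoeffs.norm_term_le (hD : HasBoundedTaylorCoeffs der r) (x h : K) (n : ℕ) :
    ‖(n.factorial : K)⁻¹ * der^[n] x * h ^ n‖ ≤ ‖x‖ * (r * ‖h‖) ^ n := by
  calc _ = ‖(n.factorial : K)⁻¹ * der^[n] x‖ * ‖h‖ ^ n := by rw [norm_mul, norm_pow]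
    _ ≤ r ^ n * ‖x‖ * ‖h‖ ^ n := by gcongr; exact hD n x
    _ = ‖x‖ * (r * ‖h‖) ^ n := by ring

lemma HasBoundedTaylorCoeffs.summable_term [CompleteSpace K] (hD : HasBoundedTaylorCoeffs der r)
    (hr : 0 ≤ r) {h : K} (hh : r * ‖h‖ < 1) (x : K) :
    Summable fun n : ℕ => (n.factorial : K)⁻¹ * der^[n] x * h ^ n :=
  .of_norm_bounded ((summable_geometric_of_lt_one (by positivity) hh).mul_left ‖x‖)
    (hD.norm_term_le x h)

lemma HasBoundedTaylorCoeffs.norm_taylorSeries_le [IsUltrametricDist K]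
    (hD : HasBoundedTaylorCoeffs der r) (hr : 0 ≤ r) {h : K} (hh : r * ‖h‖ ≤ 1) (x : K) :
    ‖taylorSeries der x h‖ ≤ ‖x‖ :=
  IsUltrametricDist.norm_tsum_le_of_forall_le_of_nonneg (norm_nonneg x) fun n =>
    (hD.norm_term_le x h n).trans
      (mul_le_of_le_one_right (norm_nonneg x) (pow_le_one₀ (by positivity) hh))

lemma HasBoundedTaylorCoeffs.norm_taylorSeries_sub_self_le [CompleteSpace K] [IsUltrametricDist K]
    (hD : HasBoundedTaylorCoeffs der r) (hr : 0 ≤ r) {h : K} (hh : r * ‖h‖ < 1) (x : K) :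
    ‖taylorSeries der x h - x‖ ≤ ‖x‖ * (r * ‖h‖) := by
  rw [taylorSeries, (hD.summable_term hr hh x).tsum_eq_zero_add]
  simp only [Nat.factorial_zero, Nat.cast_one, inv_one, Function.iterate_zero, id_eq, pow_zero,
    one_mul, mul_one, add_sub_cancel_left]
  refine IsUltrametricDist.norm_tsum_le_of_forall_le_of_nonneg (by positivity) fun n => ?_
  refine (hD.norm_term_le x h (n + 1)).trans ?_
  rw [pow_succ']
  exact mul_le_mul_of_nonneg_left
    (mul_le_of_le_one_right (by positivity) (pow_le_one₀ (by positivity) hh.le)) (norm_nonneg x)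

lemma taylorSeries_eq_add_of_der_der_eq_zero (h0 : der 0 = 0) {x : K} (h2 : der (der x) = 0)
    (h : K) : taylorSeries der x h = x + der x * h := by
  rw [taylorSeries, tsum_eq_sum (s := range 2) fun n hn => ?_]
  · simp [sum_range_succ]
  · obtain ⟨m, rfl⟩ : ∃ m, n = m + 2 := ⟨n - 2, by simp at hn; omega⟩
    rw [Function.iterate_add_apply, Function.iterate_succ_apply' _ 1, Function.iterate_one, h2,
      Function.iterate_fixed h0, mul_zero, zero_mul]

lemma HasBoundedTaylorCoeffs.tsum_taylorSeries_iterate [CharZero K] [CompleteSpace K]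
    (hD : HasBoundedTaylorCoeffs der r) (hr : 0 ≤ r) {h k : K} (hh : r * ‖h‖ < 1)
    (hk : r * ‖k‖ < 1) (x : K) :
    ∑' m : ℕ, (m.factorial : K)⁻¹ * taylorSeries der (der^[m] x) h * k ^ m =
      taylorSeries der x (h + k) := by
  set F : ℕ × ℕ → K := fun mn => (mn.1.factorial : K)⁻¹ *
    ((mn.2.factorial : K)⁻¹ * der^[mn.2] (der^[mn.1] x) * h ^ mn.2) * k ^ mn.1 with hF
  have hF_le : ∀ mn : ℕ × ℕ, ‖F mn‖ ≤ ‖x‖ * (r * ‖k‖) ^ mn.1 * (r * ‖h‖) ^ mn.2 := by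
    rintro ⟨m, n⟩
    calc ‖F (m, n)‖ = ‖(m.factorial : K)⁻¹‖ *
            ‖(n.factorial : K)⁻¹ * der^[n] (der^[m] x) * h ^ n‖ * ‖k‖ ^ m := by
          rw [hF, norm_mul, norm_mul, norm_pow]
      _ ≤ ‖(m.factorial : K)⁻¹‖ * (‖der^[m] x‖ * (r * ‖h‖) ^ n) * ‖k‖ ^ m := by
          gcongr; exact hD.norm_term_le (der^[m] x) h n
      _ = ‖(m.factorial : K)⁻¹ * der^[m] x‖ * ‖k‖ ^ m * (r * ‖h‖) ^ n := by
          rw [norm_mul]; ring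
      _ ≤ r ^ m * ‖x‖ * ‖k‖ ^ m * (r * ‖h‖) ^ n := by gcongr; exact hD m x
      _ = ‖x‖ * (r * ‖k‖) ^ m * (r * ‖h‖) ^ n := by ring
  have hF_summable : Summable F := by
    refine .of_norm_bounded ?_ hF_le
    have geom {t : K} (ht : r * ‖t‖ < 1) := summable_geometric_of_lt_one (by positivity) ht
    simpa only [mul_assoc] using ((geom hk).mul_of_nonneg (geom hh) (fun _ => by positivity)
      (fun _ => by positivity)).mul_left ‖x‖
  have hdiag (N : ℕ) : ∑ mn ∈ antidiagonal N, F mn =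
      (N.factorial : K)⁻¹ * der^[N] x * (h + k) ^ N := by
    rw [add_comm, (Commute.all k h).add_pow', mul_sum]
    refine sum_congr rfl fun ⟨m, n⟩ hmn => ?_
    obtain rfl : m + n = N := mem_antidiagonal.mp hmn
    simp only [hF]
    rw [← Function.iterate_add_apply der n m, nsmul_eq_mul, Nat.cast_add_choose, add_comm n m]
    have : ((m + n).factorial : K) ≠ 0 := Nat.cast_ne_zero.mpr (Nat.factorial_ne_zero _)
    field_simp
  calc _ = ∑' m, ∑' n, F (m, n) := tsum_congr fun m => by
        rw [taylorSeries, ← tsum_mul_left, ← tsum_mul_right]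
    _ = ∑' N, ∑ mn ∈ antidiagonal N, F mn := tsum_tsum_eq_tsum_sum_antidiagonal hF_summable
    _ = taylorSeries der x (h + k) := tsum_congr hdiag

lemma HasBoundedTaylorCoeffs.map_taylorSeries [CharZero K] [CompleteSpace K] [IsUltrametricDist K]
    (hD : HasBoundedTaylorCoeffs der r) (hr : 0 ≤ r) {F : Type*} [FunLike F K K]
    [RingHomClass F K K] {τ : F} {h : K}
    (hτ : ∀ x, τ x = taylorSeries der x h) (hh : r * ‖h‖ < 1) {k : K} (hk : r * ‖k‖ < 1)
    (hτk : r * ‖τ k‖ < 1) (x : K) :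
    τ (taylorSeries der x k) = taylorSeries der x (h + τ k) := by
  have hτ_cont : Continuous τ := AddMonoidHomClass.continuous_of_bound τ 1 fun y => by
    rw [one_mul, hτ]; exact hD.norm_taylorSeries_le hr hh.le y
  rw [taylorSeries, (hD.summable_term hr hk x).map_tsum τ hτ_cont,
    ← hD.tsum_taylorSeries_iterate hr hh hτk x]
  refine tsum_congr fun m => ?_
  rw [map_mul, map_mul, map_inv₀, map_natCast, map_pow, hτ]

lemma inv_norm_mul_norm_mul_cancel {u : K} (hu : u ≠ 0) (c : K) : ‖u‖⁻¹ * ‖c * u‖ = ‖c‖ := by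
  rw [norm_mul, mul_comm, mul_inv_cancel_right₀ (norm_ne_zero_iff.mpr hu)]

lemma HasBoundedTaylorCoeffs.norm_taylorSeries_mul_sub_self_le [CompleteSpace K]
    [IsUltrametricDist K] {u : K} (hD : HasBoundedTaylorCoeffs der ‖u‖⁻¹) (hu : u ≠ 0) {c : K}
    (hc : ‖c‖ < 1) (x : K) : ‖taylorSeries der x (c * u) - x‖ ≤ ‖x‖ * ‖c‖ := by
  have h := hD.norm_taylorSeries_sub_self_le (by positivity)
    (by rwa [inv_norm_mul_norm_mul_cancel hu]) x
  rwa [inv_norm_mul_norm_mul_cancel hu] at h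

-- `τ` sends `u` to `w u`, hence the parameter `(v - 1) u` to `(v - 1) w u`, and the Taylor
-- parameters add up to `(w - 1) u + (v - 1) w u = (v w - 1) u`.
lemma HasBoundedTaylorCoeffs.map_taylorSeries_sub_one_mul [CharZero K] [CompleteSpace K]
    [IsUltrametricDist K] {D : Derivation ℤ K K} {u : K} (hD : HasBoundedTaylorCoeffs D ‖u‖⁻¹)
    (hDu : D u = 1) {F : Type*} [FunLike F K K] [RingHomClass F K K] {τ : F} {v w : K}
    (hτ : ∀ x, τ x = taylorSeries D x ((w - 1) * u)) (hDv : D v = 0) (hw : ‖w - 1‖ < 1)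
    (hv : ‖v - 1‖ < 1) (x : K) :
    τ (taylorSeries D x ((v - 1) * u)) = taylorSeries D x ((v * w - 1) * u) := by
  have hu : u ≠ 0 := by rintro rfl; simp at hDu
  have hτ_shift : τ ((v - 1) * u) = (v - 1) * w * u := by
    rw [map_mul, map_sub, map_one, hτ, hτ,
      taylorSeries_eq_add_of_der_der_eq_zero D.map_zero (by rw [hDv, D.map_zero]),
      taylorSeries_eq_add_of_der_der_eq_zero D.map_zero (by rw [hDu, D.map_one_eq_zero]), hDv, hDu]
    ring
  have hw1 : ‖w‖ ≤ 1 := IsUltrametricDist.norm_le_one_of_norm_sub_one_le_one hw.le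
  have hvw : ‖(v - 1) * w‖ < 1 := by
    rw [norm_mul]; exact mul_lt_one_of_nonneg_of_lt_one_left (norm_nonneg _) hv hw1
  rw [← inv_norm_mul_norm_mul_cancel hu] at hw hv hvw
  rw [hD.map_taylorSeries (by positivity) hτ hw hv (by rwa [hτ_shift]), hτ_shift]
  ring_nf

end TaylorSeries

theorem residue_field_of_frobenius_fixed_field_contains_pth_powers_general
    (K : Type*) [NontriviallyNormedField K] [CompleteSpace K] [CharZero K]
    (hna : IsNonarchimedean fun x : K => ‖x‖)
    (p : ℕ) (hp : p.Prime) (hpnorm : ‖(p : K)‖ < 1)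
    (der : K → K)
    (hadd : ∀ x y : K, der (x + y) = der x + der y)
    (hmul : ∀ x y : K, der (x * y) = x * der y + y * der x)
    (u : K) (hdu : der u = 1)
    (hdiv : ∀ (n : ℕ) (x : K),
      ‖(n.factorial : K)⁻¹ * (der^[n] x)‖ ≤ (‖u‖⁻¹) ^ n * ‖x‖)
    (ζ : K) (hζ : IsPrimitiveRoot ζ p)
    (σ : ZMod p → K ≃+* K)
    (hσ : ∀ (i : ZMod p) (x : K),
      σ i x = ∑' n : ℕ, (n.factorial : K)⁻¹ * (der^[n] x) * ((ζ ^ i.val - 1) * u) ^ n) :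
    ∀ x : K, ‖x‖ ≤ 1 →
      ∃ y : K, (∀ i : ZMod p, σ i y = y) ∧ ‖y‖ ≤ 1 ∧ ‖x ^ p - y‖ < 1 := by
  have : IsUltrametricDist K := .isUltrametricDist_of_isNonarchimedean_norm hna
  have : NeZero p := ⟨hp.ne_zero⟩
  let D : Derivation ℤ K K := .mk' (AddMonoidHom.mk' der hadd).toIntLinearMap hmul
  have hD : HasBoundedTaylorCoeffs D ‖u‖⁻¹ := hdiv
  have hDu : D u = 1 := hdu
  have hu : u ≠ 0 := by rintro rfl; simp at hDu
  have hσ' (i : ZMod p) (x : K) : σ i x = taylorSeries D x ((ζ ^ i.val - 1) * u) := hσ i x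
  have hDζ (i : ZMod p) : D (ζ ^ i.val) = 0 := by
    rw [D.leibniz_pow, D.map_eq_zero_of_pow_eq_one hζ.pow_eq_one hp.ne_zero, smul_zero, smul_zero]
  have hζ_lt : ‖ζ - 1‖ < 1 :=
    IsUltrametricDist.norm_sub_one_lt_one_of_pow_eq_one hp hpnorm hζ.pow_eq_one
  have hc (i : ZMod p) : ‖ζ ^ i.val - 1‖ ≤ ‖ζ - 1‖ := IsUltrametricDist.norm_pow_sub_one_le
    (IsUltrametricDist.norm_le_one_of_norm_sub_one_le_one hζ_lt.le) _
  have hc_lt (i : ZMod p) : ‖ζ ^ i.val - 1‖ < 1 := (hc i).trans_lt hζ_lt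
  have hσσ (i j : ZMod p) (x : K) : σ j (σ i x) = σ (i + j) x := by
    rw [hσ' i, hσ' (i + j), pow_val_add_of_pow_eq_one hζ.pow_eq_one,
      hD.map_taylorSeries_sub_one_mul hDu (hσ' j) (hDζ i) (hc_lt j) (hc_lt i)]
  intro x hx
  obtain ⟨y, hy, hy1, hxy⟩ := IsUltrametricDist.exists_invariant_norm_pow_card_sub_le σ hσσ hx
    hζ_lt.le fun i => by
      rw [hσ']
      exact (hD.norm_taylorSeries_mul_sub_self_le hu (hc_lt i) x).trans
        ((mul_le_of_le_one_left (norm_nonneg _) hx).trans (hc i))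
  exact ⟨y, hy, hy1, (ZMod.card p ▸ hxy).trans_lt hζ_lt⟩

/-- **The residue field of the Frobenius subfield contains the `p`-th powers
of the residue field** (Lemma L:Frob-does-to-kappa).
Let `K` be a complete nonarchimedean field of characteristic `0` with residue
field of characteristic `p > 0` (i.e. `‖p‖ < 1`), equipped with a derivation
`der` of rational type with rational parameter `u` (so `der u = 1`,
`‖der x‖ ≤ ‖u‖⁻¹‖x‖` and `‖der^n x / n!‖ ≤ ‖u‖⁻ⁿ‖x‖`), and containing a
primitive `p`-th root of unity `ζ`.  Let `σ : ℤ/pℤ → Aut(K)` be the action by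
`der`-Taylor series `σᵢ(x) = T(x; der; (ζ^i − 1)u)`, and let
`K^{(der)} = {y : ∀ i, σᵢ y = y}` be its fixed field.  Then the residue field
of `K^{(der)}` contains `(κ_K)^p`:  for every `x ∈ 𝒪_K` there exists
`y ∈ K^{(der)} ∩ 𝒪_K` with `‖x^p − y‖ < 1`, i.e. the residue of `x^p` lies in
the residue field of `K^{(der)}`. -/
theorem residue_field_of_frobenius_fixed_field_contains_pth_powers
    (K : Type*) [NontriviallyNormedField K] [CompleteSpace K] [CharZero K]
    (hna : IsNonarchimedean fun x : K => ‖x‖)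
    (p : ℕ) (hp : p.Prime) (hpnorm : ‖(p : K)‖ < 1)
    (der : K → K)
    (hadd : ∀ x y : K, der (x + y) = der x + der y)
    (hmul : ∀ x y : K, der (x * y) = x * der y + y * der x)
    (u : K) (hu0 : u ≠ 0) (hdu : der u = 1)
    (hbound : ∀ x : K, ‖der x‖ ≤ ‖u‖⁻¹ * ‖x‖)
    (hdiv : ∀ (n : ℕ) (x : K),
      ‖(n.factorial : K)⁻¹ * (der^[n] x)‖ ≤ (‖u‖⁻¹) ^ n * ‖x‖)
    (ζ : K) (hζ : IsPrimitiveRoot ζ p)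
    (σ : ZMod p → K ≃+* K)
    (hσ : ∀ (i : ZMod p) (x : K),
      σ i x = ∑' n : ℕ, (n.factorial : K)⁻¹ * (der^[n] x) * ((ζ ^ i.val - 1) * u) ^ n) :
    ∀ x : K, ‖x‖ ≤ 1 →
      ∃ y : K, (∀ i : ZMod p, σ i y = y) ∧ ‖y‖ ≤ 1 ∧ ‖x ^ p - y‖ < 1 :=
  residue_field_of_frobenius_fixed_field_contains_pth_powers_general K hna p hp hpnorm der hadd hmul
    u hdu hdiv ζ hζ σ hσ
end

section
/- Let K be a complete nonarchimedean field of characteristic 0 with derivations ∂₁, …, ∂_m commuting and of rational type, and let ∂ = α₁∂₁ + ⋯ + α_m∂_m be a derivation extending to a K-algebra. Then for any ∂_J-differential module V and any x ∈ V, the formal power series identity T(x; ∂_J; T(u₁; ∂; δ) − u₁, …, T(u_m; ∂; δ) − u_m) = T(x; ∂; δ) holds in V ⊗_K K⟦δ⟧, where uⱼ are the rational parameters with ∂ᵢ(uⱼ) = δ_{ij} and αⱼ = ∂(uⱼ). -/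
noncomputable section

/-- Iterated application `D₁^[e 1] ∘ ⋯ ∘ D_m^[e m]` of a family of commuting
operators. -/
def iterMulti {V : Type*} {m : ℕ} (D : Fin m → V → V) (e : Fin m → ℕ) : V → V :=
  (List.finRange m).foldr (fun j f => (D j)^[e j] ∘ f) id

/-! Both sides are power series in `δ` with constant term `x`, and both satisfy the same
differential equation. On the right, `d/dδ T(x; ∂; δ) = T(∂x; ∂; δ)` with `∂x = Σ αⱼ ∂ⱼ x`, and
the Leibniz rule turns `T(αⱼ ∂ⱼ x; ∂; δ)` into `T(αⱼ; ∂; δ) · T(∂ⱼ x; ∂; δ)`. On the left, the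
chain rule gives `Σ (d/dδ Tⱼ) · T(∂ⱼ x; ∂_J; T)`, and `d/dδ Tⱼ = T(αⱼ; ∂; δ)` because
`∂ uⱼ = αⱼ`. Comparing coefficients, induction on the degree shows that the two series agree. -/

open Finset PowerSeries
open scoped Nat

namespace Derivation

variable {R A M : Type*} [CommSemiring R] [CommSemiring A] [AddCommMonoid M] [Algebra R A]
  [Module A M] [Module R M] (D : Derivation R A M)

theorem leibniz_finset_prod {ι : Type*} [DecidableEq ι] (s : Finset ι) (g : ι → A) :
    D (∏ i ∈ s, g i) = ∑ j ∈ s, (∏ i ∈ s.erase j, g i) • D (g j) := by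
  induction s using Finset.induction_on with
  | empty => simp
  | insert a s ha ih =>
    rw [prod_insert ha, leibniz, ih, sum_insert ha, erase_insert ha, smul_sum, add_comm]
    congr 1
    refine sum_congr rfl fun j hj => ?_
    rw [erase_insert_of_ne (ne_of_mem_of_not_mem hj ha).symm,
      prod_insert fun h => ha (mem_of_mem_erase h), smul_smul]

theorem leibniz_prod_pow {ι : Type*} [Fintype ι] [DecidableEq ι] (f : ι → A) (e : ι → ℕ) :
    D (∏ i, f i ^ e i) = ∑ j, e j • (∏ i, f i ^ (e - Pi.single j 1 : ι → ℕ) i) • D (f j) := by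
  rw [leibniz_finset_prod]
  refine sum_congr rfl fun j _ => ?_
  rw [leibniz_pow, smul_comm, smul_smul, ← mul_prod_erase univ _ (mem_univ j), mul_comm]
  congr 3
  · simp
  · exact prod_congr rfl fun i hi => by simp [Pi.single_eq_of_ne (ne_of_mem_erase hi)]

end Derivation

section IterMulti

variable {V : Type*} {m : ℕ} (D : Fin m → V → V)

def iterList (e : Fin m → ℕ) (l : List (Fin m)) : V → V :=
  l.foldr (fun j f => (D j)^[e j] ∘ f) id

variable {D}

@[simp]
theorem iterList_cons (e : Fin m → ℕ) (i : Fin m) (l : List (Fin m)) :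
    iterList D e (i :: l) = (D i)^[e i] ∘ iterList D e l := rfl

theorem iterList_zero (l : List (Fin m)) : iterList D 0 l = id := by
  induction l with
  | nil => rfl
  | cons i l ih => simp [ih]

theorem iterList_congr {e e' : Fin m → ℕ} {l : List (Fin m)} (h : ∀ j ∈ l, e j = e' j) :
    iterList D e l = iterList D e' l := by
  induction l with
  | nil => rfl
  | cons i l ih => rw [iterList_cons, iterList_cons, h i List.mem_cons_self,
      ih fun j hj => h j (List.mem_cons_of_mem i hj)]

theorem iterList_comp_commute (hD : ∀ i j, Function.Commute (D i) (D j)) (e : Fin m → ℕ)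
    (j : Fin m) (l : List (Fin m)) : iterList D e l ∘ D j = D j ∘ iterList D e l := by
  induction l with
  | nil => rfl
  | cons i l ih =>
    rw [iterList_cons, Function.comp_assoc, ih, ← Function.comp_assoc, ← Function.comp_assoc,
      ((hD j i).iterate_right (e i)).comp_eq]

theorem iterList_add_single (hD : ∀ i j, Function.Commute (D i) (D j)) (e : Fin m → ℕ)
    {j : Fin m} {l : List (Fin m)} (hl : l.Nodup) (hj : j ∈ l) :
    iterList D (e + Pi.single j 1) l = iterList D e l ∘ D j := by
  induction l with
  | nil => simp at hj
  | cons i l ih =>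
    obtain ⟨hil, hl⟩ := List.nodup_cons.mp hl
    by_cases hij : i = j
    · subst hij
      rw [iterList_cons, iterList_cons, iterList_congr (e' := e) fun k hk => by
        simp [Pi.single_eq_of_ne (ne_of_mem_of_not_mem hk hil)]]
      simp only [Pi.add_apply, Pi.single_eq_same, Function.iterate_succ, Function.comp_assoc,
        iterList_comp_commute hD]
    · rw [iterList_cons, iterList_cons, ih hl ((List.mem_cons.mp hj).resolve_left (Ne.symm hij))]
      simp [Pi.single_eq_of_ne hij, Function.comp_assoc]

theorem iterMulti_zero : iterMulti D (fun _ => 0) = id :=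
  iterList_zero _

theorem iterMulti_add_single (hD : ∀ i j, Function.Commute (D i) (D j)) (e : Fin m → ℕ)
    (j : Fin m) : iterMulti D (e + Pi.single j 1) = iterMulti D e ∘ D j :=
  iterList_add_single hD e (List.nodup_finRange m) (List.mem_finRange j)

end IterMulti

theorem iterate_smul_eq_sum_choose {R M : Type*} [Semiring R] [AddCommMonoid M] [Module R M]
    (d : R → R) (D : M →+ M) (hD : ∀ (a : R) (z : M), D (a • z) = a • D z + d a • z)
    (n : ℕ) (a : R) (z : M) :
    D^[n] (a • z) = ∑ p ∈ antidiagonal n, n.choose p.1 • (d^[p.1] a • D^[p.2] z) := by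
  induction n with
  | zero => simp
  | succ n ih =>
    rw [sum_antidiagonal_choose_succ_nsmul (fun i j => d^[i] a • D^[j] z) n]
    simp only [Function.iterate_succ_apply', ih, map_sum, map_nsmul, hD, smul_add,
      sum_add_distrib]
    congr 1
    refine sum_congr rfl fun ⟨i, j⟩ hij => ?_
    rw [n.choose_symm_of_eq_add (mem_antidiagonal.1 hij).symm]

section TaylorCoeff

variable (K : Type*) {M : Type*} [Field K] [AddCommGroup M] [Module K M]

def taylorCoeff (f : M → M) (z : M) (n : ℕ) : M :=
  (n ! : K)⁻¹ • f^[n] z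

variable {K}

@[simp]
theorem taylorCoeff_zero (f : M → M) (z : M) : taylorCoeff K f z 0 = z := by
  simp [taylorCoeff]

theorem succ_smul_taylorCoeff_succ [CharZero K] (f : M → M) (z : M) (n : ℕ) :
    ((n : K) + 1) • taylorCoeff K f z (n + 1) = taylorCoeff K f (f z) n := by
  have hn : (n : K) + 1 ≠ 0 := by exact_mod_cast n.succ_ne_zero
  rw [taylorCoeff, taylorCoeff, smul_smul, Nat.factorial_succ, Nat.cast_mul, Nat.cast_succ,
    mul_inv, ← mul_assoc, mul_inv_cancel₀ hn, one_mul, Function.iterate_succ_apply]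

theorem taylorCoeff_sum (D : M →+ M) {ι : Type*} (s : Finset ι) (w : ι → M) (n : ℕ) :
    taylorCoeff K D (∑ i ∈ s, w i) n = ∑ i ∈ s, taylorCoeff K D (w i) n := by
  simp only [taylorCoeff, ← smul_sum]
  congr 1
  exact map_sum ((show AddMonoid.End M from D) ^ n) w s

theorem taylorCoeff_smul [CharZero K] (d : K → K) (D : M →+ M)
    (hD : ∀ (a : K) (z : M), D (a • z) = a • D z + d a • z) (a : K) (z : M) (n : ℕ) :
    taylorCoeff K D (a • z) n =
      ∑ p ∈ antidiagonal n, taylorCoeff K d a p.1 • taylorCoeff K D z p.2 := by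
  rw [taylorCoeff, iterate_smul_eq_sum_choose d D hD, smul_sum]
  refine sum_congr rfl fun ⟨i, j⟩ hij => ?_
  obtain rfl : i + j = n := mem_antidiagonal.1 hij
  rw [taylorCoeff, taylorCoeff, smul_eq_mul, smul_smul, ← Nat.cast_smul_eq_nsmul K, smul_smul,
    smul_smul]
  congr 1
  have hfac : ((i + j)! : K) = (i + j).choose i * i ! * j ! := by
    rw [Nat.choose_symm_add]; exact_mod_cast (Nat.add_choose_mul_factorial_mul_factorial i j).symm
  have hchoose : ((i + j).choose i : K) ≠ 0 := by
    exact_mod_cast (Nat.choose_pos (Nat.le_add_right i j)).ne'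
  rw [hfac]
  field_simp

end TaylorCoeff

theorem coeff_prod_pow_mul_eq_zero {R ι : Type*} [CommSemiring R] [Fintype ι] {T : ι → R⟦X⟧}
    (hT : ∀ j, constantCoeff (T j) = 0) {e : ι → ℕ} {j : ι} {n : ℕ} (h : n < e j) (q : R⟦X⟧) :
    coeff n ((∏ i, T i ^ e i) * q) = 0 := by
  have hX : X ^ e j ∣ (∏ i, T i ^ e i) * q :=
    ((pow_dvd_pow_of_dvd (X_dvd_iff.mpr (hT j)) _).trans
      (dvd_prod_of_mem (fun i => T i ^ e i) (mem_univ j))).mul_right q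
  exact X_pow_dvd_iff.mp hX n h

theorem sum_piFinset_range_succ_eq_of_add_single {ι M : Type*} [Fintype ι] [DecidableEq ι]
    [AddCommMonoid M] {N : ℕ} (j : ι) {F G : (ι → ℕ) → M} (hF₀ : ∀ e, e j = 0 → F e = 0)
    (hF : ∀ f, F (f + Pi.single j 1) = G f)
    (hG : ∀ f ∉ Fintype.piFinset fun _ => range (N + 1), G f = 0) :
    ∑ e ∈ Fintype.piFinset (fun _ : ι => range (N + 2)), F e =
      ∑ f ∈ Fintype.piFinset fun _ => range (N + 1), G f := by
  have hsub : (Fintype.piFinset fun _ => range (N + 1)).image (· + Pi.single j 1) ⊆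
      Fintype.piFinset fun _ : ι => range (N + 2) := by
    intro e he
    obtain ⟨f, hf, rfl⟩ := mem_image.mp he
    simp only [Fintype.mem_piFinset, mem_range, Pi.add_apply, Pi.single_apply] at hf ⊢
    intro i
    have := hf i
    split_ifs <;> omega
  have hzero : ∀ e ∈ Fintype.piFinset (fun _ : ι => range (N + 2)),
      e ∉ (Fintype.piFinset fun _ => range (N + 1)).image (· + Pi.single j 1) → F e = 0 := by
    intro e _ he
    by_cases hej : e j = 0
    · exact hF₀ e hej
    have hshift : e - Pi.single j 1 + Pi.single j 1 = e := by
      ext i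
      simp only [Pi.add_apply, Pi.sub_apply, Pi.single_apply]
      split_ifs with hi
      · subst hi; omega
      · rfl
    rw [← hshift, hF]
    exact hG _ fun hf => he (mem_image.mpr ⟨_, hf, hshift⟩)
  rw [← sum_subset hsub hzero, sum_image fun f _ f' _ => add_right_cancel]
  exact sum_congr rfl fun f _ => hF f

theorem prod_factorial_add_single {ι : Type*} [Fintype ι] [DecidableEq ι] (f : ι → ℕ) (j : ι) :
    ∏ i, ((f + Pi.single j 1 : ι → ℕ) i)! = (f j + 1) * ∏ i, (f i)! := by
  rw [← mul_prod_erase univ _ (mem_univ j), ← mul_prod_erase univ (fun i => (f i)!) (mem_univ j),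
    prod_congr rfl (g := fun i => (f i)!) fun i hi => by
      simp [Pi.single_eq_of_ne (ne_of_mem_erase hi)]]
  simp [Nat.factorial_succ, mul_assoc]

section MultiTaylorCoeff

variable {K V : Type*} [Field K] [AddCommGroup V] [Module K V] {m : ℕ}

/-- The `n`-th coefficient of `T(y; ∂_J; T₁, …, T_m)`; cutting the exponents off at `n` loses
nothing as soon as the `T j` have no constant term. -/
def multiTaylorCoeff (D : Fin m → V → V) (T : Fin m → K⟦X⟧) (y : V) (n : ℕ) : V :=
  ∑ e ∈ Fintype.piFinset fun _ : Fin m => range (n + 1),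
    coeff n (∏ j, T j ^ e j) • ((∏ j, ((e j)! : K))⁻¹ • iterMulti D e y)

variable {D : Fin m → V → V} {T : Fin m → K⟦X⟧}

@[simp]
theorem multiTaylorCoeff_zero (y : V) : multiTaylorCoeff D T y 0 = y := by
  simpa [multiTaylorCoeff] using congrFun iterMulti_zero y

theorem multiTaylorCoeff_eq_sum_of_subset (hT : ∀ j, constantCoeff (T j) = 0) (y : V) {n : ℕ}
    {s : Finset (Fin m → ℕ)} (hs : (Fintype.piFinset fun _ => range (n + 1)) ⊆ s) :
    multiTaylorCoeff D T y n =
      ∑ e ∈ s, coeff n (∏ j, T j ^ e j) • ((∏ j, ((e j)! : K))⁻¹ • iterMulti D e y) := by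
  refine sum_subset hs fun e _ he => ?_
  obtain ⟨j, hj⟩ : ∃ j, n < e j := by simpa [Nat.lt_succ_iff] using he
  rw [← mul_one (∏ j, T j ^ e j), coeff_prod_pow_mul_eq_zero hT hj, zero_smul]

/-- Differentiating `T(y; ∂_J; T)` with respect to `T j` gives `T(D j y; ∂_J; T)`. -/
theorem sum_coeff_pderiv_smul_iterMulti [CharZero K] (hD : ∀ i j, Function.Commute (D i) (D j))
    (hT : ∀ j, constantCoeff (T j) = 0) (q : K⟦X⟧) (y : V) (n : ℕ) (j : Fin m) :
    ∑ e ∈ Fintype.piFinset (fun _ : Fin m => range (n + 2)),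
      (e j • coeff n ((∏ i, T i ^ (e - Pi.single j 1 : Fin m → ℕ) i) * q)) •
        ((∏ i, ((e i)! : K))⁻¹ • iterMulti D e y) =
      ∑ f ∈ Fintype.piFinset (fun _ : Fin m => range (n + 1)),
        coeff n ((∏ i, T i ^ f i) * q) • ((∏ i, ((f i)! : K))⁻¹ • iterMulti D f (D j y)) := by
  refine sum_piFinset_range_succ_eq_of_add_single j (fun e he => by simp [he])
    (fun f => ?_) (fun f hf => ?_)
  · have hfac : ∏ i, (((f + Pi.single j 1 : Fin m → ℕ) i)! : K) =
        (f j + 1) * ∏ i, ((f i)! : K) := by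
      exact_mod_cast prod_factorial_add_single f j
    have hne : (f j + 1 : K) ≠ 0 := by exact_mod_cast (f j).succ_ne_zero
    rw [add_tsub_cancel_right, iterMulti_add_single hD, Function.comp_apply, hfac, smul_smul,
      smul_smul, ← Nat.cast_smul_eq_nsmul K]
    simp only [Pi.add_apply, Pi.single_eq_same, smul_eq_mul, Nat.cast_add, Nat.cast_one]
    congr 1
    field_simp
  · obtain ⟨i, hi⟩ : ∃ i, n < f i := by simpa [Nat.lt_succ_iff] using hf
    rw [coeff_prod_pow_mul_eq_zero hT hi, zero_smul]

theorem succ_smul_multiTaylorCoeff_succ [CharZero K] (hD : ∀ i j, Function.Commute (D i) (D j))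
    (hT : ∀ j, constantCoeff (T j) = 0) (y : V) (n : ℕ) :
    ((n : K) + 1) • multiTaylorCoeff D T y (n + 1) =
      ∑ j, ∑ p ∈ antidiagonal n, coeff p.2 (d⁄dX K (T j)) • multiTaylorCoeff D T (D j y) p.1 := by
  calc ((n : K) + 1) • multiTaylorCoeff D T y (n + 1)
      = ∑ e ∈ Fintype.piFinset (fun _ : Fin m => range (n + 2)),
          coeff n (d⁄dX K (∏ i, T i ^ e i)) • ((∏ i, ((e i)! : K))⁻¹ • iterMulti D e y) := by
        rw [multiTaylorCoeff, smul_sum]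
        refine sum_congr rfl fun e _ => ?_
        rw [coeff_derivative, smul_smul, mul_comm]
    _ = ∑ j, ∑ f ∈ Fintype.piFinset (fun _ : Fin m => range (n + 1)),
          coeff n ((∏ i, T i ^ f i) * d⁄dX K (T j)) •
            ((∏ i, ((f i)! : K))⁻¹ • iterMulti D f (D j y)) := by
        simp only [Derivation.leibniz_prod_pow, map_sum, sum_smul, smul_eq_mul, map_nsmul]
        rw [sum_comm]
        exact sum_congr rfl fun j _ => sum_coeff_pderiv_smul_iterMulti hD hT _ y n j
    _ = _ := by
        refine sum_congr rfl fun j _ => ?_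
        simp only [coeff_mul, sum_smul]
        rw [sum_comm]
        refine sum_congr rfl fun p hp => ?_
        have hbox : (Fintype.piFinset fun _ : Fin m => range (p.1 + 1)) ⊆
            Fintype.piFinset fun _ => range (n + 1) :=
          Fintype.piFinset_subset _ _ fun _ => range_subset_range.mpr
            (by have := (mem_antidiagonal.mp hp); omega)
        rw [multiTaylorCoeff_eq_sum_of_subset hT _ hbox, smul_sum]
        exact sum_congr rfl fun f _ => by rw [mul_comm, mul_smul]

theorem multiTaylorCoeff_eq_taylorCoeff [CharZero K] (hD : ∀ i j, Function.Commute (D i) (D j))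
    (hT : ∀ j, constantCoeff (T j) = 0) {d : K → K} {α : Fin m → K}
    (hT' : ∀ j k, coeff k (d⁄dX K (T j)) = taylorCoeff K d (α j) k)
    (DV : V →+ V) (hDV : ∀ y, DV y = ∑ j, α j • D j y)
    (hleib : ∀ (a : K) (z : V), DV (a • z) = a • DV z + d a • z) (n : ℕ) (y : V) :
    multiTaylorCoeff D T y n = taylorCoeff K DV y n := by
  induction n using Nat.strong_induction_on generalizing y with
  | _ n ih =>
  cases n with
  | zero => simp
  | succ n =>
    have hn : (n : K) + 1 ≠ 0 := by exact_mod_cast n.succ_ne_zero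
    refine smul_right_injective V hn ?_
    calc ((n : K) + 1) • multiTaylorCoeff D T y (n + 1)
        = ∑ j, ∑ p ∈ antidiagonal n, coeff p.2 (d⁄dX K (T j)) • multiTaylorCoeff D T (D j y) p.1 :=
          succ_smul_multiTaylorCoeff_succ hD hT y n
      _ = ∑ j, ∑ p ∈ antidiagonal n, taylorCoeff K d (α j) p.2 • taylorCoeff K DV (D j y) p.1 := by
          refine sum_congr rfl fun j _ => sum_congr rfl fun p hp => ?_
          rw [hT', ih p.1 (by have := mem_antidiagonal.mp hp; omega)]
      _ = ∑ j, taylorCoeff K DV (α j • D j y) n := by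
          refine sum_congr rfl fun j _ => ?_
          rw [taylorCoeff_smul d DV hleib, ← Nat.sum_antidiagonal_swap]
          rfl
      _ = ((n : K) + 1) • taylorCoeff K DV y (n + 1) := by
          rw [succ_smul_taylorCoeff_succ, hDV, taylorCoeff_sum]

end MultiTaylorCoeff

theorem taylor_series_change_of_derivation_general
    (K : Type) [Field K] [CharZero K] (m : ℕ)
    (dK : Fin m → K → K)
    (u : Fin m → K)
    (huu : ∀ j, dK j (u j) = 1)
    (huz : ∀ i j, i ≠ j → dK i (u j) = 0)
    (α : Fin m → K)
    (V : Type) [AddCommGroup V] [Module K V]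
    (DJ : Fin m → V → V)
    (hDadd : ∀ j, ∀ x y : V, DJ j (x + y) = DJ j x + DJ j y)
    (hDleib : ∀ j, ∀ (a : K) (x : V), DJ j (a • x) = a • DJ j x + dK j a • x)
    (hDcomm : ∀ i j, ∀ x : V, DJ i (DJ j x) = DJ j (DJ i x))
    -- the derivation `der = Σ α j · dK j` on `K` and its action `DV` on `V`
    (der : K → K) (hder : ∀ a : K, der a = ∑ j, α j * dK j a)
    (DV : V → V) (hDV : ∀ x : V, DV x = ∑ j, α j • DJ j x)
    -- the Taylor series `T(u_j; der; δ) − u_j ∈ K⟦δ⟧`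
    (Tser : Fin m → PowerSeries K)
    (hTser : ∀ j, Tser j = PowerSeries.mk fun n =>
      if n = 0 then 0 else (n.factorial : K)⁻¹ * (der^[n] (u j)))
    (x : V) :
    ∀ n : ℕ,
      ∑ e ∈ Fintype.piFinset (fun _ : Fin m => Finset.range (n + 1)),
        (PowerSeries.coeff n (∏ j, (Tser j) ^ (e j))) •
          ((∏ j, ((e j).factorial : K))⁻¹ • iterMulti DJ e x) =
      (n.factorial : K)⁻¹ • DV^[n] x := by
  have hα : ∀ j, der (u j) = α j := fun j => by
    rw [hder, sum_eq_single j (fun i _ hij => by rw [huz i j hij, mul_zero]) (by simp), huu,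
      mul_one]
  have hleib : ∀ (a : K) (z : V), DV (a • z) = a • DV z + der a • z := fun a z => by
    simp only [hDV, hder, hDleib, smul_add, sum_add_distrib, smul_sum, sum_smul, smul_smul,
      mul_comm a]
  have hT0 : ∀ j, constantCoeff (Tser j) = 0 := by simp [hTser]
  have hT' : ∀ j k, coeff k (d⁄dX K (Tser j)) = taylorCoeff K der (α j) k := fun j k => by
    rw [coeff_derivative, hTser, coeff_mk, if_neg k.succ_ne_zero, ← hα,
      ← succ_smul_taylorCoeff_succ, smul_eq_mul, mul_comm]
    rfl
  let DV' : V →+ V := AddMonoidHom.mk' DV fun y z => by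
    simp only [hDV, hDadd, smul_add, sum_add_distrib]
  exact fun n => multiTaylorCoeff_eq_taylorCoeff hDcomm hT0 hT' DV' hDV hleib n x

/-- **Change of derivation in Taylor series** (the tautological lemma of
Subsection S:multi-derivations).
Let `K` be a field of characteristic zero with commuting derivations
`dK 1, …, dK m` of rational type with parameters `u 1, …, u m`
(`dK j (u j) = 1`, `dK i (u j) = 0` for `i ≠ j`), let
`der = α 1 • dK 1 + ⋯ + α m • dK m` (so `α j = der (u j)`), and let `V` be a
`∂_J`-differential module with commuting actions `DJ j`, on which `der` acts
as `DV = Σ α j • DJ j`.  Then for every `x ∈ V` the formal power series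
identity
`T(x; ∂_J; T(u₁; der; δ) − u₁, …, T(u_m; der; δ) − u_m) = T(x; der; δ)`
holds in `V ⊗_K K⟦δ⟧`; equivalently, comparing coefficients of `δ^n`:
`Σ_e (coeff_n ∏_j ((T(u_j; der; δ) − u_j))^{e_j}) • (∂_J^e x)/(e!) = (der^n x)/n!`
for every `n`. -/
theorem taylor_series_change_of_derivation
    (K : Type) [Field K] [CharZero K] (m : ℕ)
    (dK : Fin m → K → K)
    (hadd : ∀ j, ∀ x y : K, dK j (x + y) = dK j x + dK j y)
    (hmul : ∀ j, ∀ x y : K, dK j (x * y) = x * dK j y + y * dK j x)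
    (hcommK : ∀ i j, ∀ x : K, dK i (dK j x) = dK j (dK i x))
    (u : Fin m → K)
    (huu : ∀ j, dK j (u j) = 1)
    (huz : ∀ i j, i ≠ j → dK i (u j) = 0)
    (α : Fin m → K)
    (V : Type) [AddCommGroup V] [Module K V]
    (DJ : Fin m → V → V)
    (hDadd : ∀ j, ∀ x y : V, DJ j (x + y) = DJ j x + DJ j y)
    (hDleib : ∀ j, ∀ (a : K) (x : V), DJ j (a • x) = a • DJ j x + dK j a • x)
    (hDcomm : ∀ i j, ∀ x : V, DJ i (DJ j x) = DJ j (DJ i x))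
    -- the derivation `der = Σ α j · dK j` on `K` and its action `DV` on `V`
    (der : K → K) (hder : ∀ a : K, der a = ∑ j, α j * dK j a)
    (DV : V → V) (hDV : ∀ x : V, DV x = ∑ j, α j • DJ j x)
    -- the Taylor series `T(u_j; der; δ) − u_j ∈ K⟦δ⟧`
    (Tser : Fin m → PowerSeries K)
    (hTser : ∀ j, Tser j = PowerSeries.mk fun n =>
      if n = 0 then 0 else (n.factorial : K)⁻¹ * (der^[n] (u j)))
    (x : V) :
    ∀ n : ℕ,
      ∑ e ∈ Fintype.piFinset (fun _ : Fin m => Finset.range (n + 1)),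
        (PowerSeries.coeff n (∏ j, (Tser j) ^ (e j))) •
          ((∏ j, ((e j).factorial : K))⁻¹ • iterMulti DJ e x) =
      (n.factorial : K)⁻¹ • DV^[n] x :=
  taylor_series_change_of_derivation_general K m dK u huu huz α V DJ hDadd hDleib hDcomm der hder DV
    hDV Tser hTser x
end
end
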